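/- Let Ψ = diag(ψ_1, …, ψ_m) be a diagonal inner multiplier on H²(𝔻, ℂ^m) and Θ ∈ H^∞(𝔻, L(ℂ^r, ℂ^m)) an inner multiplier with r ≤ m. Then (Ψ K_Θ)^⊥ is almost invariant for the forward shift S with defect at most m; explicitly, S (Ψ K_Θ)^⊥ ⊆ (Ψ K_Θ)^⊥ + span{Ψ e_1, …, Ψ e_m} where {e_i} is the standard basis of ℂ^m. -/

import Mathlib

noncomputable section

open scoped ENNReal ComplexConjugate
open ContinuousLinearMap

abbrev Cm (m : ℕ) := EuclideanSpace ℂ (Fin m)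
abbrev H2 (m : ℕ) := lp (fun _ : ℕ => Cm m) 2

namespace Hardy

variable {m r : ℕ}

lemma two_toReal : (2 : ℝ≥0∞).toReal = 2 := by norm_num

def shiftFun (f : ℕ → Cm m) : ℕ → Cm m := fun n => match n with
  | 0 => 0
  | k + 1 => f k

lemma shift_memℓp (f : H2 m) : Memℓp (shiftFun (f : ∀ _, Cm m)) 2 := by
  rw [memℓp_gen_iff (by norm_num)]
  have hs : Summable fun n : ℕ => ‖(f : ∀ _, Cm m) n‖ ^ (2 : ℝ≥0∞).toReal :=
    (lp.memℓp f).summable (by norm_num)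
  have : Summable fun n : ℕ =>
      ‖shiftFun (f : ∀ _, Cm m) (n + 1)‖ ^ (2 : ℝ≥0∞).toReal := hs
  exact (summable_nat_add_iff 1).mp this

/-- The forward shift `S` on the vector-valued Hardy space (Taylor-coefficient model). -/
def S (m : ℕ) : H2 m →L[ℂ] H2 m :=
  LinearMap.mkContinuous
    { toFun := fun f => ⟨shiftFun (f : ∀ _, Cm m), shift_memℓp f⟩
      map_add' := by
        intro f g
        apply Subtype.ext
        have key : shiftFun (↑(f + g) : ∀ _, Cm m)
            = shiftFun (f : ∀ _, Cm m) + shiftFun (g : ∀ _, Cm m) := by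
          funext n
          have h : (shiftFun (f : ∀ _, Cm m) + shiftFun (g : ∀ _, Cm m)) n
              = shiftFun (f : ∀ _, Cm m) n + shiftFun (g : ∀ _, Cm m) n := rfl
          rw [h, lp.coeFn_add]
          cases n with
          | zero => simp [shiftFun]
          | succ k => simp [shiftFun]
        exact key
      map_smul' := by
        intro c f
        apply Subtype.ext
        have key : shiftFun (↑(c • f) : ∀ _, Cm m)
            = c • shiftFun (f : ∀ _, Cm m) := by
          funext n
          have h : (c • shiftFun (f : ∀ _, Cm m)) n
              = c • shiftFun (f : ∀ _, Cm m) n := rfl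
          rw [h, lp.coeFn_smul]
          cases n with
          | zero => simp [shiftFun]
          | succ k => simp [shiftFun]
        exact key }
    1
    (by
      intro f
      simp only [one_mul]
      apply le_of_eq
      have h2 : (0:ℝ) < (2 : ℝ≥0∞).toReal := by norm_num
      rw [lp.norm_eq_tsum_rpow h2, lp.norm_eq_tsum_rpow h2]
      congr 1
      have hsum : Summable fun n : ℕ =>
          ‖shiftFun (f : ∀ _, Cm m) n‖ ^ (2 : ℝ≥0∞).toReal := by
        rw [← memℓp_gen_iff (by norm_num)]; exact shift_memℓp f
      have key : ∑' n : ℕ, ‖shiftFun (f : ∀ _, Cm m) n‖ ^ (2 : ℝ≥0∞).toReal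
          = ∑' n : ℕ, ‖(f : ∀ _, Cm m) n‖ ^ (2 : ℝ≥0∞).toReal := by
        rw [hsum.tsum_eq_zero_add]
        simp [shiftFun]
      exact key)

/-- The backward shift `S*` (the adjoint of the forward shift). -/
def Sadj (m : ℕ) : H2 m →L[ℂ] H2 m := ContinuousLinearMap.adjoint (S m)

/-- `T` is a multiplier (multiplication by an operator-valued analytic function),
characterized by intertwining the shifts. -/
def IsMultiplier (T : H2 r →L[ℂ] H2 m) : Prop := S m ∘L T = T ∘L S r

/-- `T` is (the multiplication operator of) an inner multiplier: an isometric multiplier. -/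
def IsInnerMultiplier (T : H2 r →L[ℂ] H2 m) : Prop :=
  (∀ f, ‖T f‖ = ‖f‖) ∧ IsMultiplier T

/-- The model space `K_Θ = H² ⊖ Θ H²`. -/
def modelSpace (T : H2 r →L[ℂ] H2 m) : Submodule ℂ (H2 m) := (LinearMap.range (T : H2 r →ₗ[ℂ] H2 m))ᗮ

/-- The constant function with value `v` (Taylor coefficients `(v,0,0,…)`). -/
def const (v : Cm m) : H2 m := lp.single 2 0 v

/-- The constant function `eᵢ`. -/
def e (m : ℕ) (i : Fin m) : H2 m := const (EuclideanSpace.single i 1)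

lemma coord_norm_le (x : Cm m) (i : Fin m) : ‖x i‖ ≤ ‖x‖ := by
  rw [EuclideanSpace.norm_eq]
  have h1 : ‖x i‖ = Real.sqrt (‖x i‖ ^ 2) := by
    rw [Real.sqrt_sq (norm_nonneg _)]
  rw [h1]
  apply Real.sqrt_le_sqrt
  exact Finset.single_le_sum (f := fun j => ‖x j‖ ^ 2)
    (fun j _ => by positivity) (Finset.mem_univ i)

lemma coord_memℓp (i : Fin m) (f : H2 m) :
    Memℓp (fun n => EuclideanSpace.single (0 : Fin 1) ((f : ∀ _, Cm m) n i)) 2 := by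
  rw [memℓp_gen_iff (by norm_num)]
  have hs : Summable fun n : ℕ => ‖(f : ∀ _, Cm m) n‖ ^ (2 : ℝ≥0∞).toReal :=
    (lp.memℓp f).summable (by norm_num)
  apply Summable.of_nonneg_of_le (fun n => by positivity) _ hs
  intro n
  have : ‖EuclideanSpace.single (0 : Fin 1) ((f : ∀ _, Cm m) n i)‖
      = ‖(f : ∀ _, Cm m) n i‖ := by
    simp [EuclideanSpace.norm_single]
  rw [this]
  have h := coord_norm_le ((f : ∀ _, Cm m) n) i
  exact Real.rpow_le_rpow (norm_nonneg _) h (by norm_num)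

/-- The `i`-th coordinate (column) of a `ℂᵐ`-valued Hardy space function, as a scalar
Hardy space function. -/
def coord (i : Fin m) (f : H2 m) : H2 1 :=
  ⟨fun n => EuclideanSpace.single (0 : Fin 1) ((f : ∀ _, Cm m) n i), coord_memℓp i f⟩

/-- A multiplier on `H²(𝔻, ℂᵐ)` is diagonal, `Ψ = diag(ψ₁, …, ψ_m)`, with scalar
multipliers `ψᵢ` represented by the operators `t i`. -/
def IsDiagonal (T : H2 m →L[ℂ] H2 m) (t : Fin m → (H2 1 →L[ℂ] H2 1)) : Prop :=
  ∀ (f : H2 m) (i : Fin m), coord i (T f) = t i (coord i f)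

/-- The analytic function on the disc associated to a scalar Hardy space element. -/
def toFun (f : H2 1) (z : ℂ) : ℂ := ∑' n : ℕ, ((f : ∀ _, Cm 1) n 0) * z ^ n

/-- `F` is a finite Blaschke product on the unit disc. -/
def IsFiniteBlaschke (F : ℂ → ℂ) : Prop :=
  ∃ (k : ℕ) (c : ℂ) (a : Fin k → ℂ), ‖c‖ = 1 ∧ (∀ i, ‖a i‖ < 1) ∧
    ∀ z ∈ Metric.ball (0 : ℂ) 1,
      F z = c * ∏ i, (z - a i) / (1 - (starRingEnd ℂ) (a i) * z)

/-- `W = M ⊖ (M ∩ zH²)`. -/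
def Wspace (M : Submodule ℂ (H2 m)) : Submodule ℂ (H2 m) :=
  M ⊓ (M ⊓ LinearMap.range (S m : H2 m →ₗ[ℂ] H2 m))ᗮ

end Hardy

/-!
Write `k ∈ K_Θ` as `k = k(0) + z · S*k`. Since `Θ` commutes with `S`, `K_Θ` is `S*`-invariant, so
`Ψ k = Ψ k(0) + S (Ψ S*k)` with `Ψ S*k ∈ Ψ K_Θ`. For `f ⊥ Ψ K_Θ` the summand `S (Ψ S*k)` is
orthogonal to `S f` (as `S` is an isometry) and to every `Ψ eᵢ` (as `Ψ` is an isometry commuting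
with `S`, and constants are orthogonal to `z H²`). Thus `Ψ K_Θ ≤ D ⊔ (Dᗮ ⊓ (S f)ᗮ)` for
`D = span {Ψ eᵢ}`, which forces `S f - P_D (S f) ⊥ Ψ K_Θ`.
-/

theorem Submodule.mem_orthogonal_sup_of_le_sup_inf {𝕜 E : Type*} [RCLike 𝕜]
    [NormedAddCommGroup E] [InnerProductSpace 𝕜 E] {M D : Submodule 𝕜 E}
    [D.HasOrthogonalProjection] {x : E} (h : M ≤ D ⊔ (Dᗮ ⊓ (𝕜 ∙ x)ᗮ)) : x ∈ Mᗮ ⊔ D := by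
  have hx : x - D.starProjection x ∈ Mᗮ := by
    intro u hu
    obtain ⟨d, hd, w, ⟨hwD, hwx⟩, rfl⟩ := Submodule.mem_sup.1 (h hu)
    rw [inner_add_left, D.inner_right_of_mem_orthogonal hd (D.sub_starProjection_mem_orthogonal x),
      inner_sub_right, Submodule.mem_orthogonal_singleton_iff_inner_left.1 hwx,
      D.inner_left_of_mem_orthogonal (D.starProjection_apply_mem x) hwD, sub_zero, zero_add]
  simpa using Submodule.add_mem_sup hx (D.starProjection_apply_mem x)

theorem Submodule.mem_orthogonal_span_range {𝕜 E ι : Type*} [RCLike 𝕜] [NormedAddCommGroup E]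
    [InnerProductSpace 𝕜 E] {v : ι → E} {y : E} (h : ∀ i, inner 𝕜 (v i) y = 0) :
    y ∈ (Submodule.span 𝕜 (Set.range v))ᗮ := by
  have hle : Submodule.span 𝕜 (Set.range v) ≤ (𝕜 ∙ y)ᗮ := Submodule.span_le.2 <|
    Set.range_subset_iff.2 fun i => Submodule.mem_orthogonal_singleton_iff_inner_left.2 (h i)
  exact (Submodule.mem_orthogonal _ _).2 fun u hu =>
    Submodule.mem_orthogonal_singleton_iff_inner_left.1 (hle hu)

namespace Hardy

variable {m r : ℕ}

local notation "⟪" x ", " y "⟫" => @inner ℂ _ _ x y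

lemma S_apply (f : H2 m) : ((S m f : H2 m) : ∀ _, Cm m) = shiftFun (f : ∀ _, Cm m) := rfl

lemma norm_S (f : H2 m) : ‖S m f‖ = ‖f‖ := by
  have h2 : (0 : ℝ) < (2 : ℝ≥0∞).toReal := by norm_num
  have hsum : Summable fun n => ‖shiftFun (f : ∀ _, Cm m) n‖ ^ (2 : ℝ≥0∞).toReal :=
    (shift_memℓp f).summable h2
  rw [lp.norm_eq_tsum_rpow h2, lp.norm_eq_tsum_rpow h2]
  congr 1
  rw [S_apply, hsum.tsum_eq_zero_add]
  simp [shiftFun]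

lemma inner_S_S (f g : H2 m) : ⟪S m f, S m g⟫ = ⟪f, g⟫ :=
  LinearIsometry.inner_map_map ⟨(S m).toLinearMap, norm_S⟩ f g

lemma inner_const_S (v : Cm m) (g : H2 m) : ⟪const v, S m g⟫ = 0 := by
  classical
  rw [const, lp.inner_single_left]
  exact inner_zero_right _

lemma inner_S_const (g : H2 m) (v : Cm m) : ⟪S m g, const v⟫ = 0 :=
  inner_eq_zero_symm.1 (inner_const_S v g)

lemma leftShift_memℓp (f : H2 m) : Memℓp (fun n => (f : ∀ _, Cm m) (n + 1)) 2 := by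
  rw [memℓp_gen_iff (by norm_num : (0 : ℝ) < (2 : ℝ≥0∞).toReal)]
  exact (summable_nat_add_iff 1).2 ((lp.memℓp f).summable (by norm_num))

/-- The backward shift, in the form `f ↦ (f - f(0)) / z`. -/
def leftShift (f : H2 m) : H2 m :=
  ⟨fun n => (f : ∀ _, Cm m) (n + 1), leftShift_memℓp f⟩

lemma const_add_S_leftShift (f : H2 m) : const ((f : ∀ _, Cm m) 0) + S m (leftShift f) = f := by
  ext1
  funext n
  rw [lp.coeFn_add, Pi.add_apply]
  cases n with
  | zero => simp [const, S_apply, shiftFun]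
  | succ k => simp [const, S_apply, shiftFun, leftShift]

lemma const_eq_sum (v : Cm m) : const v = ∑ i, v i • e m i := by
  conv_lhs => rw [← (EuclideanSpace.basisFun (Fin m) ℂ).sum_repr v]
  rw [const, ← lp.lsingle_apply (𝕜 := ℂ), map_sum]
  simp [e, const]

lemma IsMultiplier.map_S {T : H2 r →L[ℂ] H2 m} (hT : IsMultiplier T) (g : H2 r) :
    S m (T g) = T (S r g) :=
  congrArg (· g) hT

lemma leftShift_mem_modelSpace {Θ : H2 r →L[ℂ] H2 m} (hΘ : IsMultiplier Θ) {k : H2 m}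
    (hk : k ∈ modelSpace Θ) : leftShift k ∈ modelSpace Θ := by
  rw [modelSpace, Submodule.mem_orthogonal] at hk ⊢
  rintro _ ⟨g, rfl⟩
  have hS : S m (leftShift k) = k - const ((k : ∀ _, Cm m) 0) :=
    eq_sub_of_add_eq' (const_add_S_leftShift k)
  calc ⟪Θ g, leftShift k⟫ = ⟪S m (Θ g), S m (leftShift k)⟫ := (inner_S_S _ _).symm
    _ = ⟪Θ (S r g), k⟫ - ⟪S m (Θ g), const ((k : ∀ _, Cm m) 0)⟫ := by
      rw [hS, inner_sub_right, hΘ.map_S]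
    _ = 0 := by rw [inner_S_const, sub_zero]; exact hk _ ⟨S r g, rfl⟩

lemma IsInnerMultiplier.inner_map_map {T : H2 r →L[ℂ] H2 m} (hT : IsInnerMultiplier T)
    (f g : H2 r) : ⟪T f, T g⟫ = ⟪f, g⟫ :=
  LinearIsometry.inner_map_map ⟨T.toLinearMap, hT.1⟩ f g

lemma IsInnerMultiplier.inner_const_S {T : H2 r →L[ℂ] H2 m} (hT : IsInnerMultiplier T)
    (v : Cm r) (g : H2 r) : ⟪T (const v), S m (T g)⟫ = 0 := by
  rw [hT.2.map_S, hT.inner_map_map, Hardy.inner_const_S]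

lemma apply_const_mem_span (T : H2 m →L[ℂ] H2 r) (v : Cm m) :
    T (const v) ∈ Submodule.span ℂ (Set.range fun i => T (e m i)) := by
  rw [const_eq_sum, map_sum]
  refine Submodule.sum_mem _ fun i _ => ?_
  rw [map_smul]
  exact Submodule.smul_mem _ _ (Submodule.subset_span ⟨i, rfl⟩)

end Hardy

open Hardy in
theorem stmt_7_general (m r : ℕ)
    (Ψ : H2 m →L[ℂ] H2 m)
    (hΨ : IsInnerMultiplier Ψ)
    (Θ : H2 r →L[ℂ] H2 m) (hΘ : IsInnerMultiplier Θ) :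
    ∀ f ∈ ((modelSpace Θ).map (Ψ : H2 m →ₗ[ℂ] H2 m))ᗮ,
      S m f ∈ ((modelSpace Θ).map (Ψ : H2 m →ₗ[ℂ] H2 m))ᗮ ⊔
        Submodule.span ℂ (Set.range fun i : Fin m => Ψ (e m i)) := by
  intro f hf
  have := FiniteDimensional.span_of_finite ℂ (Set.finite_range fun i : Fin m => Ψ (e m i))
  refine Submodule.mem_orthogonal_sup_of_le_sup_inf ?_
  rintro _ ⟨k, hk, rfl⟩
  have hΨk : Ψ k = Ψ (const ((k : ∀ _, Cm m) 0)) + S m (Ψ (leftShift k)) := by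
    rw [hΨ.2.map_S, ← map_add, const_add_S_leftShift]
  rw [ContinuousLinearMap.coe_coe, hΨk]
  refine Submodule.add_mem_sup (apply_const_mem_span Ψ _) ⟨?_, ?_⟩
  · exact Submodule.mem_orthogonal_span_range fun i => hΨ.inner_const_S _ _
  · rw [SetLike.mem_coe, Submodule.mem_orthogonal_singleton_iff_inner_left, inner_S_S]
    exact (Submodule.mem_orthogonal _ _).1 hf _
      (Submodule.mem_map_of_mem (leftShift_mem_modelSpace hΘ.2 hk))

open Hardy in
/-- For a diagonal inner multiplier `Ψ` and an inner multiplier `Θ : H²(ℂ^r) → H²(ℂᵐ)`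
with `r ≤ m`, `(Ψ K_Θ)ᗮ` is almost invariant for the shift with defect at most `m`:
`S (Ψ K_Θ)ᗮ ⊆ (Ψ K_Θ)ᗮ + span{Ψ e₁, …, Ψ e_m}`. -/
theorem stmt_7 (m r : ℕ) (hr : r ≤ m)
    (Ψ : H2 m →L[ℂ] H2 m) (ψ : Fin m → (H2 1 →L[ℂ] H2 1))
    (hΨ : IsInnerMultiplier Ψ) (hdiag : IsDiagonal Ψ ψ)
    (hψ : ∀ i, IsInnerMultiplier (ψ i))
    (Θ : H2 r →L[ℂ] H2 m) (hΘ : IsInnerMultiplier Θ) :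
    ∀ f ∈ ((modelSpace Θ).map (Ψ : H2 m →ₗ[ℂ] H2 m))ᗮ,
      S m f ∈ ((modelSpace Θ).map (Ψ : H2 m →ₗ[ℂ] H2 m))ᗮ ⊔
        Submodule.span ℂ (Set.range fun i : Fin m => Ψ (e m i)) :=
  stmt_7_general m r Ψ hΨ Θ hΘ
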